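/- arXiv:1411.2264 — 5 statements merged into one kernel-verified Lean document; each statement's English description precedes it below -/
import Mathlib

section
/- Let A be a commutative ring, M a finitely generated A-module, N an A-module, and p a prime ideal of A. If z1, z2 in A form an N_p-regular sequence, then z1, z2 form a regular sequence on Hom_{A_p}(M_p, N_p). -/
set_option synthInstance.maxHeartbeats 1000000
set_option maxHeartbeats 1000000

open RingTheory.Sequence

open Pointwise in
/-- If `x` is regular on `N` and `y` is regular on `N/xN`, then `x` is regular on
`Hom(M, N)` and `y` is regular on `Hom(M, N)/x·Hom(M, N)`. -/
lemma aux_hom_regular {R M N : Type*} [CommRing R] [AddCommGroup M] [Module R M]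
    [AddCommGroup N] [Module R N] {x y : R}
    (hx : IsSMulRegular N x) (hy : IsSMulRegular (QuotSMulTop x N) y) :
    IsSMulRegular (M →ₗ[R] N) x ∧ IsSMulRegular (QuotSMulTop x (M →ₗ[R] N)) y := by
  constructor
  · intro f g h
    ext m
    exact hx (by simpa using LinearMap.congr_fun h m)
  · rw [isSMulRegular_quotient_iff_mem_of_smul_mem]
    intro f hf
    -- hf : y • f ∈ x • ⊤, so y • f = x • g for some g
    obtain ⟨g, -, hg⟩ := (Set.mem_smul_set).mp hf
    -- every value of f lies in x • N
    have hmem : ∀ m : M, f m ∈ x • (⊤ : Submodule R N) := by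
      intro m
      have h0 : y • (Submodule.Quotient.mk (f m) : QuotSMulTop x N) = y • 0 := by
        rw [smul_zero, ← Submodule.Quotient.mk_smul, Submodule.Quotient.mk_eq_zero]
        have : y • f m = x • g m := by
          have := LinearMap.congr_fun hg m
          simpa using this.symm
        rw [this]
        exact Submodule.smul_mem_pointwise_smul _ _ _ Submodule.mem_top
      have := hy h0
      rwa [Submodule.Quotient.mk_eq_zero] at this
    have hx' : Function.Injective (LinearMap.lsmul R N x) := hx
    let e : N ≃ₗ[R] LinearMap.range (LinearMap.lsmul R N x) :=
      LinearEquiv.ofInjective _ hx'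
    have hrange : ∀ m : M, f m ∈ LinearMap.range (LinearMap.lsmul R N x) := by
      intro m
      obtain ⟨n, -, hn⟩ := (Set.mem_smul_set).mp (hmem m)
      exact ⟨n, hn⟩
    refine Set.mem_smul_set.mpr
      ⟨(e.symm : _ →ₗ[R] N).comp (f.codRestrict _ hrange), Submodule.mem_top, ?_⟩
    ext m
    simp only [LinearMap.smul_apply, LinearMap.comp_apply, LinearEquiv.coe_coe,
      LinearMap.codRestrict_apply]
    calc x • e.symm ⟨f m, hrange m⟩
        = LinearMap.lsmul R N x (e.symm ⟨f m, hrange m⟩) := rfl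
      _ = ↑(e (e.symm ⟨f m, hrange m⟩)) :=
          (LinearEquiv.ofInjective_apply (LinearMap.lsmul R N x) _).symm
      _ = f m := by rw [e.apply_symm_apply]

/-- Let `A` be a commutative ring, `M` a finitely generated `A`-module, `N` an `A`-module,
and `p` a prime of `A`.  If `z₁, z₂ ∈ A` form a regular sequence on `N_p` (i.e. `z₁` is a
nonzerodivisor on `N_p` and `z₂` is a nonzerodivisor on `N_p/z₁N_p`), then `z₁, z₂` form a
regular sequence on `Hom_{A_p}(M_p, N_p)`. -/
theorem regular_sequence_on_hom (A : Type*) [CommRing A]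
    (M N : Type*) [AddCommGroup M] [Module A M] [Module.Finite A M]
    [AddCommGroup N] [Module A N]
    (p : Ideal A) [p.IsPrime] (z₁ z₂ : A)
    (hreg : IsWeaklyRegular (LocalizedModule p.primeCompl N)
      [algebraMap A (Localization.AtPrime p) z₁, algebraMap A (Localization.AtPrime p) z₂]) :
    IsWeaklyRegular
      (LocalizedModule p.primeCompl M →ₗ[Localization.AtPrime p]
        LocalizedModule p.primeCompl N)
      [algebraMap A (Localization.AtPrime p) z₁, algebraMap A (Localization.AtPrime p) z₂] := by
  rw [isWeaklyRegular_cons_iff] at hreg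
  obtain ⟨hx, hy'⟩ := hreg
  rw [isWeaklyRegular_cons_iff] at hy'
  obtain ⟨hy, -⟩ := hy'
  obtain ⟨h1, h2⟩ := aux_hom_regular (M := LocalizedModule p.primeCompl M) hx hy
  exact IsWeaklyRegular.cons h1 (IsWeaklyRegular.cons h2 (IsWeaklyRegular.nil _ _))
end

section
/- Let C → A be a finite (module-finite) extension of commutative Noetherian rings and M a finitely generated A-module. If p is a prime of A and q = C ∩ p its contraction, then depth of M_p as an A_p-module is at least the depth of M_q as a C_q-module. -/
set_option synthInstance.maxHeartbeats 1000000
set_option maxHeartbeats 1000000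

/-- `depthGE R M n` means that there is a (weakly) regular sequence on `M` of length `n`
consisting of elements of the maximal ideal of the local ring `R`; for finitely generated
modules over a Noetherian local ring this says exactly that `depth_R M ≥ n`. -/
def depthGE (R : Type*) [CommRing R] [IsLocalRing R] (M : Type*) [AddCommGroup M]
    [Module R M] (n : ℕ) : Prop :=
  ∃ rs : List R, rs.length = n ∧ (∀ r ∈ rs, r ∈ IsLocalRing.maximalIdeal R) ∧
    RingTheory.Sequence.IsWeaklyRegular M rs


open RingTheory.Sequence IsLocalizedModule Pointwise

section SingleRing

variable {A : Type*} [CommRing A] (S : Submonoid A)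
  {N N' : Type*} [AddCommGroup N] [AddCommGroup N'] [Module A N] [Module A N']
  (f : N →ₗ[A] N') [IsLocalizedModule S f]

include S f in
lemma auxA {b : A} (h : IsSMulRegular N b) : IsSMulRegular N' b := by
  intro x y hxy
  have hxy' : b • x = b • y := hxy
  obtain ⟨⟨m₁, s₁⟩, e₁⟩ := IsLocalizedModule.surj S f x
  obtain ⟨⟨m₂, s₂⟩, e₂⟩ := IsLocalizedModule.surj S f y
  simp only [Submonoid.smul_def] at e₁ e₂
  have key : f (((s₂:A) * b) • m₁) = f (((s₁:A) * b) • m₂) := by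
    rw [map_smul, map_smul, ← e₁, ← e₂, smul_smul, smul_smul,
      show (s₂:A) * b * (s₁:A) = (s₂:A) * (s₁:A) * b by ring,
      show (s₁:A) * b * (s₂:A) = (s₂:A) * (s₁:A) * b by ring, mul_smul, mul_smul, hxy', smul_smul, smul_smul]
  obtain ⟨c, hc⟩ := IsLocalizedModule.exists_of_eq (S := S) (f := f) key
  simp only [Submonoid.smul_def, smul_smul] at hc
  have h1 : ((c:A) * (s₂:A)) • m₁ = ((c:A) * (s₁:A)) • m₂ := by
    apply h
    show b • _ = b • _
    rw [smul_smul, smul_smul,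
      show b * ((c:A) * (s₂:A)) = (c:A) * ((s₂:A) * b) by ring,
      show b * ((c:A) * (s₁:A)) = (c:A) * ((s₁:A) * b) by ring]
    exact hc
  have h2 := congrArg f h1
  simp only [map_smul, ← e₁, ← e₂, smul_smul] at h2
  apply IsLocalizedModule.smul_injective f (c * s₂ * s₁)
  simp only [Submonoid.smul_def, Submonoid.coe_mul]
  rw [mul_smul, mul_smul, mul_smul, mul_smul]
  conv_rhs => rw [smul_comm (s₂:A) (s₁:A)]
  rw [smul_smul, smul_smul, smul_smul, smul_smul]
  exact h2

end SingleRing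

lemma mem_psmul {R M : Type*} [CommRing R] [AddCommGroup M] [Module R M] {b : R}
    {P : Submodule R M} {x : M} : x ∈ b • P ↔ ∃ y ∈ P, b • y = x := Set.mem_smul_set

lemma auxClaim1 {A : Type*} [CommRing A] (S : Submonoid A) (Sr : Type*) [CommRing Sr]
    [Algebra A Sr] [IsLocalization S Sr] (bs : List A) :
    ∀ {N N' : Type*} [AddCommGroup N] [AddCommGroup N'] [Module A N] [Module A N']
      [Module Sr N'] [IsScalarTower A Sr N'] (f : N →ₗ[A] N') [IsLocalizedModule S f],
      IsWeaklyRegular N bs → IsWeaklyRegular N' bs := by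
  induction bs with
  | nil => intro N N' _ _ _ _ _ _ f _ _; exact .nil A N'
  | cons b bs ih =>
    intro N N' _ _ _ _ _ _ f _ h
    rw [RingTheory.Sequence.isWeaklyRegular_cons_iff] at h ⊢
    refine ⟨auxA S f h.1, ?_⟩
    have hloc : ((b • (⊤ : Submodule A N)).localized' Sr S f).restrictScalars A
        = (b • (⊤ : Submodule A N')) := by
      ext x
      constructor
      · rintro ⟨m, hm, s, rfl⟩
        obtain ⟨m₀, -, rfl⟩ := mem_psmul.mp hm
        rw [IsLocalizedModule.mk'_smul]
        exact Submodule.smul_mem_pointwise_smul _ b ⊤ trivial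
      · intro hx
        obtain ⟨y, -, rfl⟩ := mem_psmul.mp hx
        obtain ⟨⟨m, s⟩, rfl⟩ := IsLocalizedModule.mk'_surjective S f y
        exact ⟨b • m, Submodule.smul_mem_pointwise_smul _ b ⊤ trivial, s,
          IsLocalizedModule.mk'_smul f b m s⟩
    have hreg := ih ((b • (⊤ : Submodule A N)).toLocalizedQuotient' Sr S f) h.2
    have e : (N' ⧸ ((b • (⊤ : Submodule A N)).localized' Sr S f).restrictScalars A)
        ≃ₗ[A] QuotSMulTop b N' := Submodule.quotEquivOfEq _ _ hloc
    have e' := (Submodule.Quotient.restrictScalarsEquiv A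
      ((b • (⊤ : Submodule A N)).localized' Sr S f)).symm
    exact (e.isWeaklyRegular_congr bs).mp ((e'.isWeaklyRegular_congr bs).mp hreg)

lemma auxL3 {C A : Type*} [CommRing C] [CommRing A] [Algebra C A] (T : Submonoid C)
    {M N : Type*} [AddCommGroup M] [Module A M] [Module C M] [IsScalarTower C A M]
    [AddCommGroup N] [Module A N] [Module C N] [IsScalarTower C A N]
    (f : M →ₗ[A] N) [IsLocalizedModule (Algebra.algebraMapSubmonoid A T) f] :
    IsLocalizedModule T (f.restrictScalars C) := by
  constructor
  · intro t
    rw [Module.End.isUnit_iff]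
    have h := (Module.End.isUnit_iff _).mp (IsLocalizedModule.map_units f
      (⟨algebraMap C A t, ⟨t, t.2, rfl⟩⟩ : Algebra.algebraMapSubmonoid A T))
    have hfun : ⇑((algebraMap C (Module.End C N)) t)
        = ⇑((algebraMap A (Module.End A N)) (algebraMap C A t)) := by
      funext x
      simp only [Module.algebraMap_end_apply, algebraMap_smul]
    rw [hfun]
    exact h
  · intro y
    obtain ⟨⟨m, t'⟩, h⟩ := IsLocalizedModule.surj (Algebra.algebraMapSubmonoid A T) f y
    obtain ⟨t, ht, htt⟩ := t'.2
    refine ⟨⟨m, ⟨t, ht⟩⟩, ?_⟩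
    simp only [Submonoid.smul_def] at h ⊢
    show (t : C) • y = f m
    rw [← algebraMap_smul A (t : C) y, htt, ← h]
  · intro x₁ x₂ h
    obtain ⟨t', ht'⟩ := IsLocalizedModule.exists_of_eq
      (S := Algebra.algebraMapSubmonoid A T) (f := f) h
    obtain ⟨t, ht, htt⟩ := t'.2
    refine ⟨⟨t, ht⟩, ?_⟩
    simp only [Submonoid.smul_def] at ht' ⊢
    show (t : C) • x₁ = (t : C) • x₂
    rw [← algebraMap_smul A (t : C) x₁, ← algebraMap_smul A (t : C) x₂, htt]
    exact ht'

lemma psmul_unit_top {R N : Type*} [CommRing R] [AddCommGroup N] [Module R N] {u : R}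
    (hu : IsUnit u) (P : Submodule R N) : u • P = P := by
  apply le_antisymm
  · intro x hx
    obtain ⟨y, hy, rfl⟩ := mem_psmul.mp hx
    exact P.smul_mem u hy
  · intro x hx
    refine mem_psmul.mpr ⟨((hu.unit⁻¹ : Rˣ) : R) • x, P.smul_mem _ hx, ?_⟩
    rw [smul_smul]
    rw [hu.mul_val_inv]
    exact one_smul _ _

lemma auxUnits {R : Type*} [CommRing R] (q : Ideal R) [q.IsPrime]
    (rs : List (Localization.AtPrime q)) :
    ∀ {N : Type*} [AddCommGroup N] [Module (Localization.AtPrime q) N],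
      (∀ r ∈ rs, r ∈ IsLocalRing.maximalIdeal (Localization.AtPrime q)) →
      RingTheory.Sequence.IsWeaklyRegular N rs →
      ∃ cs : List R, cs.length = rs.length ∧ (∀ c ∈ cs, c ∈ q) ∧
        RingTheory.Sequence.IsWeaklyRegular N
          (cs.map (algebraMap R (Localization.AtPrime q))) := by
  induction rs with
  | nil =>
    intro N _ _ _ _
    exact ⟨[], rfl, by simp, by simpa using RingTheory.Sequence.IsWeaklyRegular.nil _ N⟩
  | cons r rs ih =>
    intro N _ _ hmem hreg
    obtain ⟨⟨c, s⟩, hr⟩ := IsLocalization.mk'_surjective q.primeCompl r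
    have hc : c ∈ q := by
      have h := hmem r List.mem_cons_self
      rw [← hr] at h
      exact (IsLocalization.AtPrime.mk'_mem_maximal_iff _ q c s).mp h
    rw [RingTheory.Sequence.isWeaklyRegular_cons_iff] at hreg
    have hu : IsUnit (algebraMap R (Localization.AtPrime q) (s : R)) :=
      IsLocalization.map_units _ s
    have hcr : algebraMap R (Localization.AtPrime q) c
        = algebraMap R (Localization.AtPrime q) (s : R) * r := by
      rw [← hr, IsLocalization.mk'_spec']
    have h1 : IsSMulRegular N (algebraMap R (Localization.AtPrime q) c) := by
      rw [hcr]
      exact (hu.isSMulRegular (M := N)).mul hreg.1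
    have hsub : algebraMap R (Localization.AtPrime q) c
          • (⊤ : Submodule (Localization.AtPrime q) N)
        = r • (⊤ : Submodule (Localization.AtPrime q) N) := by
      rw [hcr, mul_smul, psmul_unit_top hu]
    obtain ⟨cs, hlen, hcsq, hcsreg⟩ := ih (fun x hx => hmem x (List.mem_cons_of_mem _ hx)) hreg.2
    refine ⟨c :: cs, by simp [hlen], ?_, ?_⟩
    · intro x hx
      rcases List.mem_cons.mp hx with h | h
      · exact h ▸ hc
      · exact hcsq x h
    · rw [List.map_cons, RingTheory.Sequence.isWeaklyRegular_cons_iff]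
      refine ⟨h1, ?_⟩
      exact ((Submodule.quotEquivOfEq _ _ hsub.symm).isWeaklyRegular_congr _).mp hcsreg

/-- Let `C → A` be a module-finite extension of commutative Noetherian rings and `M` a
finitely generated `A`-module.  If `p` is a prime of `A` and `q = C ∩ p` its contraction,
then the depth of `M_p` over `A_p` is at least the depth of `M_q` over `C_q`:
any depth bound `n` attained over `C_q` is attained over `A_p`. -/
theorem depth_localization_ge (C A : Type*) [CommRing C] [CommRing A]
    [IsNoetherianRing C] [IsNoetherianRing A] [Algebra C A]
    (hinj : Function.Injective (algebraMap C A)) [Module.Finite C A]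
    (M : Type*) [AddCommGroup M] [Module A M] [Module C M] [IsScalarTower C A M]
    [Module.Finite A M]
    (p : Ideal A) [p.IsPrime] (q : Ideal C) (hq : q = p.comap (algebraMap C A))
    [q.IsPrime] (n : ℕ)
    (hdepth : depthGE (Localization.AtPrime q) (LocalizedModule q.primeCompl M) n) :
    depthGE (Localization.AtPrime p) (LocalizedModule p.primeCompl M) n := by
  obtain ⟨rs, hlen, hmem, hreg⟩ := hdepth
  obtain ⟨cs, hcslen, hcsq, hcsreg⟩ := auxUnits q rs hmem hreg
  have h2 : RingTheory.Sequence.IsWeaklyRegular (LocalizedModule q.primeCompl M) cs :=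
    (RingTheory.Sequence.isWeaklyRegular_map_algebraMap_iff (Localization.AtPrime q)
      (LocalizedModule q.primeCompl M) cs).mp hcsreg
  set T' : Submonoid A := Algebra.algebraMapSubmonoid A q.primeCompl with hT'
  letI : Module C (LocalizedModule T' M) := inferInstance
  haveI : IsScalarTower C A (LocalizedModule T' M) :=
    IsScalarTower.of_algebraMap_smul fun c x => by
      rw [Algebra.algebraMap_eq_smul_one]; exact OreLocalization.smul_one_smul c x
  haveI : IsLocalizedModule q.primeCompl
      ((LocalizedModule.mkLinearMap T' M).restrictScalars C) :=
    auxL3 q.primeCompl (LocalizedModule.mkLinearMap T' M)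
  have e := IsLocalizedModule.iso q.primeCompl
    ((LocalizedModule.mkLinearMap T' M).restrictScalars C)
  have h3 : RingTheory.Sequence.IsWeaklyRegular (LocalizedModule T' M) cs :=
    (e.isWeaklyRegular_congr cs).mp h2
  have h4 : RingTheory.Sequence.IsWeaklyRegular (LocalizedModule T' M)
      (cs.map (algebraMap C A)) :=
    (RingTheory.Sequence.isWeaklyRegular_map_algebraMap_iff A
      (LocalizedModule T' M) cs).mpr h3
  have hle : T' ≤ p.primeCompl := by
    rintro x ⟨t, ht, rfl⟩
    intro hx
    exact ht (hq ▸ Ideal.mem_comap.mpr hx)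
  have h5 : RingTheory.Sequence.IsWeaklyRegular (LocalizedModule p.primeCompl M)
      (cs.map (algebraMap C A)) :=
    auxClaim1 p.primeCompl (Localization.AtPrime p) (cs.map (algebraMap C A))
      (IsLocalizedModule.liftOfLE T' p.primeCompl hle
        (LocalizedModule.mkLinearMap T' M) (LocalizedModule.mkLinearMap p.primeCompl M)) h4
  have h6 : RingTheory.Sequence.IsWeaklyRegular (LocalizedModule p.primeCompl M)
      ((cs.map (algebraMap C A)).map (algebraMap A (Localization.AtPrime p))) :=
    (RingTheory.Sequence.isWeaklyRegular_map_algebraMap_iff (Localization.AtPrime p)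
      (LocalizedModule p.primeCompl M) (cs.map (algebraMap C A))).mpr h5
  refine ⟨(cs.map (algebraMap C A)).map (algebraMap A (Localization.AtPrime p)),
    by simp [hcslen, hlen], ?_, h6⟩
  intro r hr
  simp only [List.mem_map] at hr
  obtain ⟨a, ⟨c, hc, rfl⟩, rfl⟩ := hr
  rw [IsLocalization.AtPrime.to_map_mem_maximal_iff _ p]
  have := hcsq c hc
  rw [hq] at this
  exact Ideal.mem_comap.mp this
end

section
/- Let C → A be a module-finite extension of commutative Noetherian rings and M a finitely generated A-module that satisfies strong S_2 as a C-module. Then M satisfies strong S_2 as an A-module. -/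
set_option synthInstance.maxHeartbeats 1000000
set_option maxHeartbeats 1000000

open RingTheory.Sequence Pointwise

section AuxLemmas

lemma StrongS2Aux.mem_smul_top_iff' {R : Type*} [CommRing R] {M : Type*} [AddCommGroup M]
    [Module R M] (c : R) (x : M) : x ∈ c • (⊤ : Submodule R M) ↔ ∃ y, c • y = x := by
  rw [← SetLike.mem_coe, Submodule.coe_pointwise_smul, Set.mem_smul_set]
  simp

lemma StrongS2Aux.isSMulRegular_iff_smul_eq_zero {R : Type*} [CommRing R] {M : Type*}
    [AddCommGroup M] [Module R M] (d : R) :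
    IsSMulRegular M d ↔ ∀ z : M, d • z = 0 → z = 0 := by
  constructor
  · intro h z hz
    exact h (show d • z = d • 0 by simpa using hz)
  · intro h a b hab
    have h2 : d • (a - b) = 0 := by rw [smul_sub]; exact sub_eq_zero.mpr hab
    simpa [sub_eq_zero] using h _ h2

namespace StrongS2Aux

variable {R : Type*} [CommRing R] (W : Submonoid R) {N : Type*} [AddCommGroup N] [Module R N]

lemma loc_reg_iff (c : R) :
    IsSMulRegular (LocalizedModule W N) c ↔ ∀ m : N, c • m = 0 → ∃ s : W, (s : R) • m = 0 := by
  rw [isSMulRegular_iff_smul_eq_zero]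
  constructor
  · intro h m hm
    have h0 : c • (LocalizedModule.mk m (1 : W)) = 0 := by
      rw [LocalizedModule.smul'_mk, hm, LocalizedModule.zero_mk]
    have h1 := h _ h0
    rw [show (0 : LocalizedModule W N) = LocalizedModule.mk 0 1 from
      (LocalizedModule.zero_mk _).symm, LocalizedModule.mk_eq] at h1
    obtain ⟨u, hu⟩ := h1
    refine ⟨u, ?_⟩
    simpa [Submonoid.smul_def] using hu
  · intro h z hz
    induction z using LocalizedModule.induction_on with
    | _ m t =>
      rw [LocalizedModule.smul'_mk,
        show (0 : LocalizedModule W N) = LocalizedModule.mk 0 1 from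
          (LocalizedModule.zero_mk _).symm, LocalizedModule.mk_eq] at hz
      obtain ⟨u, hu⟩ := hz
      have hc : c • ((u : R) • m) = 0 := by
        simp only [Submonoid.smul_def, smul_zero, one_smul] at hu
        rw [smul_comm]; simpa using hu
      obtain ⟨s, hs⟩ := h _ hc
      rw [show (0 : LocalizedModule W N) = LocalizedModule.mk 0 1 from
        (LocalizedModule.zero_mk _).symm, LocalizedModule.mk_eq]
      refine ⟨s * u, ?_⟩
      simp only [Submonoid.smul_def, Submonoid.coe_mul, smul_zero, one_smul, mul_smul]
      exact hs

lemma loc_quot_reg_iff (c d : R) :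
    IsSMulRegular (QuotSMulTop c (LocalizedModule W N)) d ↔
      ∀ m k : N, d • m = c • k → ∃ s : W, ∃ k' : N, (s : R) • m = c • k' := by
  rw [isSMulRegular_iff_smul_eq_zero]
  constructor
  · intro h m k hmk
    have h0 : d • (Submodule.Quotient.mk (LocalizedModule.mk m 1) :
        QuotSMulTop c (LocalizedModule W N)) = 0 := by
      rw [← Submodule.Quotient.mk_smul, Submodule.Quotient.mk_eq_zero, mem_smul_top_iff']
      exact ⟨LocalizedModule.mk k 1, by
        rw [LocalizedModule.smul'_mk, LocalizedModule.smul'_mk, hmk]⟩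
    have h1 := h _ h0
    rw [Submodule.Quotient.mk_eq_zero, mem_smul_top_iff'] at h1
    obtain ⟨v, hv⟩ := h1
    induction v using LocalizedModule.induction_on with
    | _ k₂ t =>
      rw [LocalizedModule.smul'_mk, LocalizedModule.mk_eq] at hv
      obtain ⟨u, hu⟩ := hv
      simp only [Submonoid.smul_def, one_smul, Submonoid.coe_mul] at hu
      refine ⟨u * t, (u : R) • k₂, ?_⟩
      rw [Submonoid.coe_mul, mul_smul, ← hu, smul_comm (c) ((u : R))]
  · intro h z hz
    induction z using Submodule.Quotient.induction_on with
    | _ v =>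
      induction v using LocalizedModule.induction_on with
      | _ m t =>
        rw [← Submodule.Quotient.mk_smul, Submodule.Quotient.mk_eq_zero,
          mem_smul_top_iff'] at hz
        obtain ⟨w, hw⟩ := hz
        induction w using LocalizedModule.induction_on with
        | _ k w₂ =>
          rw [LocalizedModule.smul'_mk, LocalizedModule.smul'_mk, LocalizedModule.mk_eq] at hw
          obtain ⟨u, hu⟩ := hw
          simp only [Submonoid.smul_def] at hu
          have hd : d • (((u : R) * w₂) • m) = c • (((u : R) * t) • k) := by
            rw [mul_smul, mul_smul]
            rw [smul_comm d, smul_comm d, smul_comm c, smul_comm c]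
            exact hu.symm
          obtain ⟨s, k', hs⟩ := h _ _ hd
          rw [Submodule.Quotient.mk_eq_zero, mem_smul_top_iff']
          refine ⟨LocalizedModule.mk k' (s * (u * w₂) * t), ?_⟩
          rw [LocalizedModule.smul'_mk, ← hs]
          have heq : (s : R) • ((u : R) * w₂) • m = ((s * (u * w₂) : W) : R) • m := by
            push_cast
            simp [mul_smul]
          rw [heq, ← Submonoid.smul_def,
            LocalizedModule.mk_cancel_common_left (s * (u * w₂)) t m]

lemma alg_smul_reg_iff {R S M : Type*} [CommRing R] [CommRing S] [Algebra R S]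
    [AddCommGroup M] [Module R M] [Module S M] [IsScalarTower R S M] (c : R) :
    IsSMulRegular M (algebraMap R S c) ↔ IsSMulRegular M c := by
  constructor <;> intro h a b hab <;> apply h <;> simpa [algebraMap_smul] using hab

lemma alg_quot_reg_iff {R S M : Type*} [CommRing R] [CommRing S] [Algebra R S]
    [AddCommGroup M] [Module R M] [Module S M] [IsScalarTower R S M] (c d : R) :
    IsSMulRegular (QuotSMulTop (algebraMap R S c) M) (algebraMap R S d) ↔
      IsSMulRegular (QuotSMulTop c M) d := by
  have hrestrict : (c • (⊤ : Submodule R M)) =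
      ((algebraMap R S c) • (⊤ : Submodule S M)).restrictScalars R := by
    ext v
    rw [StrongS2Aux.mem_smul_top_iff', Submodule.restrictScalars_mem,
      StrongS2Aux.mem_smul_top_iff']
    constructor
    · rintro ⟨y, rfl⟩; exact ⟨y, by rw [algebraMap_smul]⟩
    · rintro ⟨y, rfl⟩; exact ⟨y, by rw [algebraMap_smul]⟩
  let e₁ : (M ⧸ (c • (⊤ : Submodule R M))) ≃ₗ[R]
      (M ⧸ ((algebraMap R S c) • (⊤ : Submodule S M)).restrictScalars R) :=
    Submodule.quotEquivOfEq _ _ hrestrict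
  let e₂ := Submodule.Quotient.restrictScalarsEquiv R ((algebraMap R S c) • (⊤ : Submodule S M))
  let etot := e₁ ≪≫ₗ e₂
  have hcomm : ∀ z : QuotSMulTop c M,
      etot.toEquiv (d • z) = (algebraMap R S d) • etot.toEquiv z := by
    intro z
    show etot (d • z) = (algebraMap R S d) • etot z
    rw [map_smul, algebraMap_smul]
  exact (Equiv.isSMulRegular_congr (e := etot.toEquiv) hcomm).symm

lemma krullDim_loc_comap_le (C A : Type*) [CommRing C] [CommRing A] [Algebra C A]
    [Algebra.IsIntegral C A] (p : PrimeSpectrum A) :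
    ringKrullDim (Localization.AtPrime p.1) ≤
      ringKrullDim (Localization.AtPrime (p.1.comap (algebraMap C A))) := by
  haveI := p.2
  set q : Ideal C := p.1.comap (algebraMap C A) with hq
  haveI : q.IsPrime := Ideal.IsPrime.comap _
  let e1 := IsLocalization.AtPrime.orderIsoOfPrime (Localization.AtPrime p.1) p.1
  let e2 := IsLocalization.AtPrime.orderIsoOfPrime (Localization.AtPrime q) q
  let mid : {I : Ideal A // I.IsPrime ∧ I ≤ p.1} → {I : Ideal C // I.IsPrime ∧ I ≤ q} :=
    fun r => ⟨r.1.comap (algebraMap C A),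
      ⟨haveI := r.2.1; Ideal.IsPrime.comap _, Ideal.comap_mono r.2.2⟩⟩
  let f : PrimeSpectrum (Localization.AtPrime p.1) → PrimeSpectrum (Localization.AtPrime q) :=
    fun P =>
      let r' := e2.symm (mid (e1 ⟨P.asIdeal, P.2⟩))
      ⟨r'.1, r'.2⟩
  have hf : StrictMono f := by
    intro P₁ P₂ hPP
    have h1 : e1 ⟨P₁.asIdeal, P₁.2⟩ < e1 ⟨P₂.asIdeal, P₂.2⟩ :=
      e1.strictMono (Subtype.mk_lt_mk.mpr ((PrimeSpectrum.asIdeal_lt_asIdeal _ _).mpr hPP))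
    set r₁ := e1 ⟨P₁.asIdeal, P₁.2⟩
    set r₂ := e1 ⟨P₂.asIdeal, P₂.2⟩
    haveI : r₁.1.IsPrime := r₁.2.1
    have h1' : r₁.1 < r₂.1 := h1
    obtain ⟨hle, x, hx₂, hx₁⟩ := SetLike.lt_iff_le_and_exists.mp h1'
    have hcomap : r₁.1.comap (algebraMap C A) < r₂.1.comap (algebraMap C A) :=
      Ideal.comap_lt_comap_of_integral_mem_sdiff hle ⟨hx₂, hx₁⟩
        (Algebra.IsIntegral.isIntegral x)
    have hmid : mid r₁ < mid r₂ := Subtype.mk_lt_mk.mpr hcomap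
    have h2 := e2.symm.strictMono hmid
    exact (PrimeSpectrum.asIdeal_lt_asIdeal _ _).mp h2
  exact Order.krullDim_le_of_strictMono f hf

end StrongS2Aux

end AuxLemmas

/-- A module `M` over a Noetherian ring `R` satisfies strong `S_2` if for every prime `p`
of `R` one has `depth_{R_p}(M_p) ≥ min (dim R_p, 2)`. -/
def StrongS2 (R : Type*) [CommRing R] (M : Type*) [AddCommGroup M] [Module R M] : Prop :=
  ∀ p : PrimeSpectrum R, ∀ n : ℕ,
    (n : WithBot ℕ∞) ≤ min (ringKrullDim (Localization.AtPrime p.1)) 2 →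
      depthGE (Localization.AtPrime p.1) (LocalizedModule p.1.primeCompl M) n

/-- Let `C → A` be a module-finite extension of commutative Noetherian rings and `M` a
finitely generated `A`-module satisfying strong `S_2` as a `C`-module.  Then `M` satisfies
strong `S_2` as an `A`-module. -/
theorem strongS2_of_strongS2_base (C A : Type*) [CommRing C] [CommRing A]
    [IsNoetherianRing C] [IsNoetherianRing A] [Algebra C A]
    (hinj : Function.Injective (algebraMap C A)) [Module.Finite C A]
    (M : Type*) [AddCommGroup M] [Module A M] [Module C M] [IsScalarTower C A M]
    [Module.Finite A M]
    (hS2 : StrongS2 C M) :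
    StrongS2 A M := by
  intro p n hn
  haveI := p.2
  set q : PrimeSpectrum C := ⟨p.1.comap (algebraMap C A), Ideal.IsPrime.comap _⟩ with hqdef
  have hdim : ringKrullDim (Localization.AtPrime p.1) ≤
      ringKrullDim (Localization.AtPrime q.1) :=
    StrongS2Aux.krullDim_loc_comap_le C A p
  have hdepth : depthGE (Localization.AtPrime q.1) (LocalizedModule q.1.primeCompl M) n :=
    hS2 q n (le_trans hn (min_le_min hdim le_rfl))
  have hn2 : (n : WithBot ℕ∞) ≤ 2 := le_trans hn (min_le_right _ _)
  have hnle : n ≤ 2 := by exact_mod_cast hn2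
  -- helper : normalize an element of the maximal ideal of C_q
  have normalize : ∀ x : Localization.AtPrime q.1,
      x ∈ IsLocalRing.maximalIdeal (Localization.AtPrime q.1) →
      ∃ c : C, c ∈ q.1 ∧ ∃ s : q.1.primeCompl,
        algebraMap C (Localization.AtPrime q.1) c = x * algebraMap C _ (s : C) := by
    intro x hx
    obtain ⟨⟨c, s⟩, hcs⟩ := IsLocalization.mk'_surjective q.1.primeCompl x
    have hspec := IsLocalization.mk'_spec (Localization.AtPrime q.1) c s
    have heq : algebraMap C (Localization.AtPrime q.1) c = x * algebraMap C _ (s : C) := by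
      rw [← hcs]; exact hspec.symm
    have hcq : c ∈ q.1 := by
      have hmem : algebraMap C (Localization.AtPrime q.1) c ∈
          IsLocalRing.maximalIdeal (Localization.AtPrime q.1) := by
        rw [heq]; exact Ideal.mul_mem_right _ _ hx
      exact (IsLocalization.AtPrime.to_map_mem_maximal_iff _ q.1 c).mp hmem
    exact ⟨c, hcq, s, heq⟩
  interval_cases n
  · exact ⟨[], rfl, by simp, RingTheory.Sequence.IsWeaklyRegular.nil _ _⟩
  · -- n = 1
    obtain ⟨rs, hlen, hmem, hreg⟩ := hdepth
    obtain ⟨x, rfl⟩ := List.length_eq_one_iff.mp hlen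
    obtain ⟨c, hcq, s, heq⟩ := normalize x (hmem x (by simp))
    have hx : IsSMulRegular (LocalizedModule q.1.primeCompl M) x :=
      (RingTheory.Sequence.isWeaklyRegular_singleton_iff _ _).mp hreg
    have hunit : IsUnit (algebraMap C (Localization.AtPrime q.1) (s : C)) :=
      IsLocalization.map_units _ s
    have hcreg : IsSMulRegular (LocalizedModule q.1.primeCompl M)
        (algebraMap C (Localization.AtPrime q.1) c) := by
      rw [heq]; exact hx.mul (hunit.isSMulRegular _)
    have hcregC : IsSMulRegular (LocalizedModule q.1.primeCompl M) c := by
      intro a b hab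
      exact hcreg (by simpa [algebraMap_smul] using hab)
    have hE1 : ∀ m : M, c • m = 0 → ∃ t : q.1.primeCompl, (t : C) • m = 0 :=
      (StrongS2Aux.loc_reg_iff _ c).mp hcregC
    set ca : A := algebraMap C A c with hca
    have hE1' : ∀ m : M, ca • m = 0 → ∃ t : p.1.primeCompl, (t : A) • m = 0 := by
      intro m hm
      have : c • m = 0 := by rwa [hca, algebraMap_smul] at hm
      obtain ⟨t, ht⟩ := hE1 m this
      exact ⟨⟨algebraMap C A (t : C), t.2⟩, by simpa [algebraMap_smul] using ht⟩
    have hAreg : IsSMulRegular (LocalizedModule p.1.primeCompl M) ca :=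
      (StrongS2Aux.loc_reg_iff _ ca).mpr hE1'
    have hApreg : IsSMulRegular (LocalizedModule p.1.primeCompl M)
        (algebraMap A (Localization.AtPrime p.1) ca) := by
      intro a b hab
      exact hAreg (by simpa [algebraMap_smul] using hab)
    refine ⟨[algebraMap A (Localization.AtPrime p.1) ca], rfl, ?_, ?_⟩
    · intro r hr
      simp only [List.mem_singleton] at hr
      subst hr
      exact (IsLocalization.AtPrime.to_map_mem_maximal_iff _ p.1 ca).mpr
        (Ideal.mem_comap.mp hcq)
    · exact (RingTheory.Sequence.isWeaklyRegular_singleton_iff _ _).mpr hApreg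
  · -- n = 2
    obtain ⟨rs, hlen, hmem, hreg⟩ := hdepth
    obtain ⟨x, y, rfl⟩ := List.length_eq_two.mp hlen
    obtain ⟨c, hcq, s, heqc⟩ := normalize x (hmem x (by simp))
    obtain ⟨d, hdq, s₂, heqd⟩ := normalize y (hmem y (by simp))
    rw [RingTheory.Sequence.isWeaklyRegular_cons_iff,
      RingTheory.Sequence.isWeaklyRegular_singleton_iff] at hreg
    obtain ⟨hx, hy⟩ := hreg
    have hu1 : IsUnit (algebraMap C (Localization.AtPrime q.1) (s : C)) :=
      IsLocalization.map_units _ s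
    have hu2 : IsUnit (algebraMap C (Localization.AtPrime q.1) (s₂ : C)) :=
      IsLocalization.map_units _ s₂
    have hsub : (algebraMap C (Localization.AtPrime q.1) c) •
        (⊤ : Submodule (Localization.AtPrime q.1) (LocalizedModule q.1.primeCompl M)) =
        x • ⊤ := by
      rw [heqc]
      ext v
      rw [StrongS2Aux.mem_smul_top_iff', StrongS2Aux.mem_smul_top_iff']
      constructor
      · rintro ⟨w, rfl⟩
        exact ⟨algebraMap C (Localization.AtPrime q.1) (s : C) • w, (mul_smul _ _ _).symm⟩
      · rintro ⟨w, rfl⟩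
        refine ⟨(hu1.unit⁻¹ : (Localization.AtPrime q.1)ˣ) • w, ?_⟩
        rw [mul_smul]
        congr 1
        have : algebraMap C (Localization.AtPrime q.1) (s : C) •
            ((hu1.unit⁻¹ : (Localization.AtPrime q.1)ˣ) • w) =
            (hu1.unit : (Localization.AtPrime q.1)) •
            ((hu1.unit⁻¹ : (Localization.AtPrime q.1)ˣ) • w) := by
          rw [IsUnit.unit_spec]
        rw [this, ← Units.smul_def, smul_smul, mul_inv_cancel, one_smul]
    have hxc : IsSMulRegular (LocalizedModule q.1.primeCompl M)
        (algebraMap C (Localization.AtPrime q.1) c) := by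
      rw [heqc]; exact hx.mul (hu1.isSMulRegular _)
    have hy' : IsSMulRegular (QuotSMulTop x (LocalizedModule q.1.primeCompl M))
        (algebraMap C (Localization.AtPrime q.1) d) := by
      rw [heqd]
      exact hy.mul (hu2.isSMulRegular _)
    have hyc : IsSMulRegular
        (QuotSMulTop (algebraMap C (Localization.AtPrime q.1) c)
          (LocalizedModule q.1.primeCompl M))
        (algebraMap C (Localization.AtPrime q.1) d) := by
      have e := Submodule.quotEquivOfEq _ _ hsub
      exact (e.isSMulRegular_congr (algebraMap C (Localization.AtPrime q.1) d)).mpr hy'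
    have hxC : IsSMulRegular (LocalizedModule q.1.primeCompl M) c :=
      (StrongS2Aux.alg_smul_reg_iff c).mp hxc
    have hyC : IsSMulRegular (QuotSMulTop c (LocalizedModule q.1.primeCompl M)) d :=
      (StrongS2Aux.alg_quot_reg_iff c d).mp hyc
    have hE1 : ∀ m : M, c • m = 0 → ∃ t : q.1.primeCompl, (t : C) • m = 0 :=
      (StrongS2Aux.loc_reg_iff _ c).mp hxC
    have hE2 : ∀ m k : M, d • m = c • k →
        ∃ t : q.1.primeCompl, ∃ k' : M, (t : C) • m = c • k' :=
      (StrongS2Aux.loc_quot_reg_iff _ c d).mp hyC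
    set ca : A := algebraMap C A c with hca
    set da : A := algebraMap C A d with hda
    have hE1' : ∀ m : M, ca • m = 0 → ∃ t : p.1.primeCompl, (t : A) • m = 0 := by
      intro m hm
      have hm' : c • m = 0 := by rwa [hca, algebraMap_smul] at hm
      obtain ⟨t, ht⟩ := hE1 m hm'
      exact ⟨⟨algebraMap C A (t : C), t.2⟩, by simpa [algebraMap_smul] using ht⟩
    have hE2' : ∀ m k : M, da • m = ca • k →
        ∃ t : p.1.primeCompl, ∃ k' : M, (t : A) • m = ca • k' := by
      intro m k hmk
      have hmk' : d • m = c • k := by rwa [hda, hca, algebraMap_smul, algebraMap_smul] at hmk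
      obtain ⟨t, k', ht⟩ := hE2 m k hmk'
      refine ⟨⟨algebraMap C A (t : C), t.2⟩, k', ?_⟩
      show (algebraMap C A (t : C)) • m = ca • k'
      rw [algebraMap_smul, hca, algebraMap_smul]
      exact ht
    have hA1 : IsSMulRegular (LocalizedModule p.1.primeCompl M) ca :=
      (StrongS2Aux.loc_reg_iff _ ca).mpr hE1'
    have hA2 : IsSMulRegular (QuotSMulTop ca (LocalizedModule p.1.primeCompl M)) da :=
      (StrongS2Aux.loc_quot_reg_iff _ ca da).mpr hE2'
    have hA1p : IsSMulRegular (LocalizedModule p.1.primeCompl M)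
        (algebraMap A (Localization.AtPrime p.1) ca) :=
      (StrongS2Aux.alg_smul_reg_iff ca).mpr hA1
    have hA2p : IsSMulRegular
        (QuotSMulTop (algebraMap A (Localization.AtPrime p.1) ca)
          (LocalizedModule p.1.primeCompl M))
        (algebraMap A (Localization.AtPrime p.1) da) :=
      (StrongS2Aux.alg_quot_reg_iff ca da).mpr hA2
    refine ⟨[algebraMap A (Localization.AtPrime p.1) ca,
      algebraMap A (Localization.AtPrime p.1) da], rfl, ?_, ?_⟩
    · intro r hr
      simp only [List.mem_cons, List.mem_singleton, List.not_mem_nil, or_false] at hr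
      rcases hr with rfl | rfl
      · exact (IsLocalization.AtPrime.to_map_mem_maximal_iff _ p.1 ca).mpr
          (Ideal.mem_comap.mp hcq)
      · exact (IsLocalization.AtPrime.to_map_mem_maximal_iff _ p.1 da).mpr
          (Ideal.mem_comap.mp hdq)
    · rw [RingTheory.Sequence.isWeaklyRegular_cons_iff,
        RingTheory.Sequence.isWeaklyRegular_singleton_iff]
      exact ⟨hA1p, hA2p⟩
end

section
/- Let A be a reduced commutative ring and B an extension of A. Then A is seminormal in B if and only if for every b ∈ B, b² ∈ A and b³ ∈ A imply b ∈ A. -/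
set_option synthInstance.maxHeartbeats 1000000
set_option maxHeartbeats 1000000

/-- All residue field extensions induced by `f` are isomorphisms: for every prime `q` of the
target with contraction `p`, the induced map `κ(p) → κ(q)` is bijective. -/
def ResidueFieldExtensionsTrivial {A B : Type*} [CommRing A] [CommRing B] (f : A →+* B) :
    Prop :=
  ∀ (q : Ideal B) (hq : q.IsPrime),
    haveI := hq
    haveI : (q.comap f).IsPrime := hq.comap f
    haveI := Localization.isLocalHom_localRingHom (q.comap f) q f rfl
    Function.Bijective (IsLocalRing.ResidueField.map (Localization.localRingHom (q.comap f) q f rfl))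

/-- A subring extension `A ≤ C` (inside an ambient ring `B`) is subintegral
(a quasi-isomorphism) if it is integral, induces a bijection on prime spectra, and all
residue field extensions are isomorphisms. -/
def Subring.IsSubintegralIn {B : Type*} [CommRing B] (A C : Subring B) (h : A ≤ C) : Prop :=
  (Subring.inclusion h).IsIntegral ∧
    Function.Bijective (PrimeSpectrum.comap (Subring.inclusion h)) ∧
    ResidueFieldExtensionsTrivial (Subring.inclusion h)

/-- `A` is seminormal in `B` if it equals the largest subring of `B` subintegral over `A`,
i.e. if it admits no strictly larger subintegral extension inside `B`. -/
def Subring.IsSeminormalIn {B : Type*} [CommRing B] (A : Subring B) : Prop :=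
  ∀ (C : Subring B) (h : A ≤ C), A.IsSubintegralIn C h → C = A

section Aux

open Polynomial

variable {B : Type*} [CommRing B]

@[simp] lemma aux_inclusion_coe {A C : Subring B} (h : A ≤ C) (x : ↥A) :
    ((Subring.inclusion h x : ↥C) : B) = (x : B) := rfl

lemma aux_inclusion_injective {A C : Subring B} (h : A ≤ C) :
    Function.Injective (Subring.inclusion h) := fun a b hab => by
  have := congrArg Subtype.val hab
  exact Subtype.ext this

/-- Surjectivity of `Spec` for an injective integral ring map. -/
lemma aux_comap_surjective {R S : Type*} [CommRing R] [CommRing S] (f : R →+* S)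
    (hf : f.IsIntegral) (hinj : Function.Injective f) :
    Function.Surjective (PrimeSpectrum.comap f) := by
  intro p
  letI := f.toAlgebra
  haveI : Algebra.IsIntegral R S := ⟨fun x => hf x⟩
  haveI := p.2
  obtain ⟨Q, -, hQp, hQc⟩ := Ideal.exists_ideal_over_prime_of_isIntegral p.asIdeal ⊥
    (fun x hx => by
      have h0 : f x = 0 := (by simpa [Ideal.mem_comap] using hx : algebraMap R S x = 0)
      have : x = 0 := hinj (by simpa using h0)
      simp [this])
  exact ⟨⟨Q, hQp⟩, PrimeSpectrum.ext (by rw [PrimeSpectrum.comap_asIdeal]; exact hQc)⟩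

/-- The subring `A + A·b`, for `b` with `b² ∈ A`. -/
def scAdj (A : Subring B) (b : B) (hb2 : b ^ 2 ∈ A) : Subring B where
  carrier := {x | ∃ a₀ a₁ : A, x = (a₀ : B) + (a₁ : B) * b}
  zero_mem' := ⟨0, 0, by simp⟩
  one_mem' := ⟨1, 0, by simp⟩
  add_mem' := by
    rintro x y ⟨a₀, a₁, rfl⟩ ⟨c₀, c₁, rfl⟩
    exact ⟨a₀ + c₀, a₁ + c₁, by push_cast; ring⟩
  neg_mem' := by
    rintro x ⟨a₀, a₁, rfl⟩
    exact ⟨-a₀, -a₁, by push_cast; ring⟩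
  mul_mem' := by
    rintro x y ⟨a₀, a₁, rfl⟩ ⟨c₀, c₁, rfl⟩
    refine ⟨a₀ * c₀ + a₁ * c₁ * ⟨b ^ 2, hb2⟩, a₀ * c₁ + a₁ * c₀, ?_⟩
    have hbb : ((⟨b ^ 2, hb2⟩ : A) : B) = b ^ 2 := rfl
    push_cast [hbb]
    ring

lemma mem_scAdj {A : Subring B} {b : B} {hb2 : b ^ 2 ∈ A} {x : B} :
    x ∈ scAdj A b hb2 ↔ ∃ a₀ a₁ : A, x = (a₀ : B) + (a₁ : B) * b := Iff.rfl

lemma le_scAdj {A : Subring B} {b : B} {hb2 : b ^ 2 ∈ A} : A ≤ scAdj A b hb2 :=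
  fun a ha => ⟨⟨a, ha⟩, 0, by simp⟩

lemma self_mem_scAdj {A : Subring B} {b : B} {hb2 : b ^ 2 ∈ A} : b ∈ scAdj A b hb2 :=
  ⟨0, 1, by simp⟩

lemma scAdj_isIntegral (A : Subring B) (b : B) (hb2 : b ^ 2 ∈ A) :
    (Subring.inclusion (le_scAdj (hb2 := hb2))).IsIntegral := by
  intro x
  obtain ⟨a₀, a₁, hx⟩ := x.2
  refine ⟨X ^ 2 + C (-(2 * a₀)) * X + C (a₀ ^ 2 - a₁ ^ 2 * ⟨b ^ 2, hb2⟩), ?_, ?_⟩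
  · have hre : (X ^ 2 + C (-(2 * a₀)) * X + C (a₀ ^ 2 - a₁ ^ 2 * ⟨b ^ 2, hb2⟩) : Polynomial A)
        = X ^ 2 + (C (-(2 * a₀)) * X + C (a₀ ^ 2 - a₁ ^ 2 * ⟨b ^ 2, hb2⟩)) := by ring
    rw [hre]
    apply Polynomial.monic_X_pow_add
    refine lt_of_le_of_lt (Polynomial.degree_add_le _ _) ?_
    refine max_lt (lt_of_le_of_lt (Polynomial.degree_C_mul_X_le _) ?_)
      (lt_of_le_of_lt Polynomial.degree_C_le ?_)
    · exact_mod_cast Nat.one_lt_two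
    · exact_mod_cast Nat.zero_lt_two
  · simp only [Polynomial.eval₂_add, Polynomial.eval₂_mul, Polynomial.eval₂_pow,
      Polynomial.eval₂_X, Polynomial.eval₂_C]
    apply Subtype.ext
    have hbb : ((⟨b ^ 2, hb2⟩ : A) : B) = b ^ 2 := rfl
    have h2 : ((2 : ↥A) : B) = 2 := rfl
    push_cast [aux_inclusion_coe, hbb, h2]
    rw [hx]
    ring

lemma scAdj_prime_le (A : Subring B) (b : B) (hb2 : b ^ 2 ∈ A) (hb3 : b ^ 3 ∈ A)
    (q₁ q₂ : Ideal ↥(scAdj A b hb2)) (h1 : q₁.IsPrime) (h2 : q₂.IsPrime)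
    (hpp : q₁.comap (Subring.inclusion (le_scAdj (hb2 := hb2)))
      = q₂.comap (Subring.inclusion (le_scAdj (hb2 := hb2)))) : q₁ ≤ q₂ := by
  set f := Subring.inclusion (le_scAdj (hb2 := hb2)) with hf
  intro x hx
  obtain ⟨a₀, a₁, hxv⟩ := x.2
  set bC : ↥(scAdj A b hb2) := ⟨b, self_mem_scAdj⟩ with hbC
  have hxCb : x = f a₀ + f a₁ * bC := Subtype.ext (by
    push_cast [aux_inclusion_coe]
    exact hxv)
  have hbsq : bC ^ 2 = f ⟨b ^ 2, hb2⟩ := Subtype.ext (by push_cast [aux_inclusion_coe]; rfl)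
  by_cases hmem : (⟨b ^ 2, hb2⟩ : ↥A) ∈ q₁.comap f
  · have hbq1 : bC ∈ q₁ := h1.mem_of_pow_mem 2 (by rw [hbsq]; exact hmem)
    have hbq2 : bC ∈ q₂ := h2.mem_of_pow_mem 2 (by
      rw [hbsq]
      exact (show (⟨b ^ 2, hb2⟩ : ↥A) ∈ q₂.comap f from hpp ▸ hmem))
    have ha₀ : f a₀ ∈ q₁ := by
      have he : f a₀ = x - f a₁ * bC := by rw [hxCb]; ring
      rw [he]
      exact q₁.sub_mem hx (q₁.mul_mem_left _ hbq1)
    have ha₀' : a₀ ∈ q₂.comap f := hpp ▸ (show a₀ ∈ q₁.comap f from ha₀)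
    rw [hxCb]
    exact q₂.add_mem ha₀' (q₂.mul_mem_left _ hbq2)
  · have hq2mem : (⟨b ^ 2, hb2⟩ : ↥A) ∉ q₂.comap f := hpp ▸ hmem
    have hA : (x : B) * b ^ 2 ∈ A := by
      rw [hxv]
      have he : ((a₀ : B) + (a₁ : B) * b) * b ^ 2 = (a₀ : B) * b ^ 2 + (a₁ : B) * b ^ 3 := by
        ring
      rw [he]
      exact A.add_mem (A.mul_mem a₀.2 hb2) (A.mul_mem a₁.2 hb3)
    have hxb2 : x * f ⟨b ^ 2, hb2⟩ = f ⟨(x : B) * b ^ 2, hA⟩ := Subtype.ext rfl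
    have h1' : (⟨(x : B) * b ^ 2, hA⟩ : ↥A) ∈ q₁.comap f := by
      show f _ ∈ q₁
      rw [← hxb2]
      exact q₁.mul_mem_right _ hx
    have h2' : f ⟨(x : B) * b ^ 2, hA⟩ ∈ q₂ :=
      (show (⟨(x : B) * b ^ 2, hA⟩ : ↥A) ∈ q₂.comap f from hpp ▸ h1')
    rw [← hxb2] at h2'
    rcases h2.mem_or_mem h2' with hx2 | hb2'
    · exact hx2
    · exact absurd hb2' hq2mem

lemma scAdj_spec_injective (A : Subring B) (b : B) (hb2 : b ^ 2 ∈ A) (hb3 : b ^ 3 ∈ A) :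
    Function.Injective (PrimeSpectrum.comap (Subring.inclusion (le_scAdj (hb2 := hb2)))) := by
  intro Q₁ Q₂ hQ
  have hQ' : Q₁.asIdeal.comap (Subring.inclusion (le_scAdj (hb2 := hb2)))
      = Q₂.asIdeal.comap (Subring.inclusion (le_scAdj (hb2 := hb2))) := by
    have h1 := PrimeSpectrum.comap_asIdeal (Subring.inclusion (le_scAdj (hb2 := hb2))) Q₁
    have h2 := PrimeSpectrum.comap_asIdeal (Subring.inclusion (le_scAdj (hb2 := hb2))) Q₂
    rw [← h1, ← h2, hQ]
  exact PrimeSpectrum.ext (le_antisymm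
    (scAdj_prime_le A b hb2 hb3 _ _ Q₁.2 Q₂.2 hQ')
    (scAdj_prime_le A b hb2 hb3 _ _ Q₂.2 Q₁.2 hQ'.symm))

lemma scAdj_res_trivial (A : Subring B) (b : B) (hb2 : b ^ 2 ∈ A) (hb3 : b ^ 3 ∈ A) :
    ResidueFieldExtensionsTrivial (Subring.inclusion (le_scAdj (hb2 := hb2))) := by
  set Cb := scAdj A b hb2 with hCb
  set f := Subring.inclusion (le_scAdj (hb2 := hb2)) with hf
  intro q hq
  haveI := hq
  haveI : (q.comap f).IsPrime := hq.comap f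
  haveI := Localization.isLocalHom_localRingHom (q.comap f) q f rfl
  set L₁ := Localization.AtPrime (q.comap f) with hL₁
  set L₂ := Localization.AtPrime q with hL₂
  set Ψ := IsLocalRing.ResidueField.map (Localization.localRingHom (q.comap f) q f rfl) with hΨ
  constructor
  · exact RingHom.injective _
  · intro y
    obtain ⟨w, rfl⟩ := IsLocalRing.residue_surjective y
    obtain ⟨⟨cn, sd⟩, rfl⟩ := IsLocalization.mk'_surjective q.primeCompl w
    have hψA : ∀ a : ↥A, Ψ (IsLocalRing.residue L₁ (algebraMap _ L₁ a))
        = IsLocalRing.residue L₂ (algebraMap _ L₂ (f a)) := fun a => by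
      rw [hΨ, IsLocalRing.ResidueField.map_residue, Localization.localRingHom_to_map]
    have hmemmax : ∀ cc : ↥Cb, algebraMap _ L₂ cc ∈ IsLocalRing.maximalIdeal L₂ ↔ cc ∈ q :=
      fun cc => IsLocalization.AtPrime.to_map_mem_maximal_iff L₂ q cc
    have key : ∀ cc : ↥Cb, ∃ ξ, Ψ ξ = IsLocalRing.residue L₂ (algebraMap _ L₂ cc) := by
      intro cc
      obtain ⟨a₀, a₁, hcc⟩ := cc.2
      set bC : ↥Cb := ⟨b, self_mem_scAdj⟩ with hbCdef
      have hccEq : cc = f a₀ + f a₁ * bC := Subtype.ext (by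
        push_cast [aux_inclusion_coe]
        exact hcc)
      have hbξ : ∃ ξb, Ψ ξb = IsLocalRing.residue L₂ (algebraMap _ L₂ bC) := by
        by_cases hbq : bC ∈ q
        · exact ⟨0, by
            rw [map_zero]
            symm
            rw [IsLocalRing.residue_eq_zero_iff]
            exact (hmemmax bC).mpr hbq⟩
        · have hbsq : bC ^ 2 = f ⟨b ^ 2, hb2⟩ := Subtype.ext (by
            push_cast [aux_inclusion_coe]; rfl)
          have hb2q : f ⟨b ^ 2, hb2⟩ ∉ q := fun hmem =>
            hbq (hq.mem_of_pow_mem 2 (by rw [hbsq]; exact hmem))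
          have hne : IsLocalRing.residue L₂ (algebraMap _ L₂ (f ⟨b ^ 2, hb2⟩)) ≠ 0 := by
            rw [Ne, IsLocalRing.residue_eq_zero_iff]
            exact fun hmem => hb2q ((hmemmax _).mp hmem)
          refine ⟨IsLocalRing.residue L₁ (algebraMap _ L₁ (⟨b ^ 3, hb3⟩ : ↥A))
            / IsLocalRing.residue L₁ (algebraMap _ L₁ (⟨b ^ 2, hb2⟩ : ↥A)), ?_⟩
          rw [map_div₀, hψA, hψA, div_eq_iff hne, ← map_mul, ← map_mul]
          have he : (f ⟨b ^ 3, hb3⟩ : ↥(scAdj A b hb2)) = bC * f ⟨b ^ 2, hb2⟩ :=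
            Subtype.ext (by simp only [hf]; push_cast [aux_inclusion_coe]; ring)
          rw [he]
      obtain ⟨ξb, hξb⟩ := hbξ
      refine ⟨IsLocalRing.residue L₁ (algebraMap _ L₁ a₀)
        + IsLocalRing.residue L₁ (algebraMap _ L₁ a₁) * ξb, ?_⟩
      rw [map_add, map_mul, hψA, hψA, hξb, hccEq]
      rw [map_add, map_add, map_mul, map_mul]
    obtain ⟨ξc, hξc⟩ := key cn
    obtain ⟨ξs, hξs⟩ := key (↑sd)
    have hsne : IsLocalRing.residue L₂ (algebraMap _ L₂ (↑sd : ↥Cb)) ≠ 0 := by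
      rw [Ne, IsLocalRing.residue_eq_zero_iff]
      exact fun hmem => sd.2 ((hmemmax _).mp hmem)
    refine ⟨ξc / ξs, ?_⟩
    rw [map_div₀, hξc, hξs, div_eq_iff hsne, ← map_mul]
    exact (congrArg _ (IsLocalization.mk'_spec _ _ _)).symm

/-- A subring `C` containing `A` viewed as an `A`-subalgebra of `B`. -/
def subalgOf (A C : Subring B) (h : A ≤ C) : Subalgebra (↥A) B where
  toSubsemiring := C.toSubsemiring
  algebraMap_mem' := fun r => h r.2

lemma mem_subalgOf {A C : Subring B} (h : A ≤ C) {x : B} : x ∈ subalgOf A C h ↔ x ∈ C := Iff.rfl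

lemma exists_sq_cube_elem {A C : Subring B} (h : A ≤ C)
    (hint : (Subring.inclusion h).IsIntegral)
    (hinj : Function.Injective (PrimeSpectrum.comap (Subring.inclusion h)))
    (hsurj : Function.Surjective (PrimeSpectrum.comap (Subring.inclusion h)))
    (hres : ResidueFieldExtensionsTrivial (Subring.inclusion h))
    {c : B} (hcC : c ∈ C) (hcA : c ∉ A) :
    ∃ z : B, z ∉ A ∧ z ^ 2 ∈ A ∧ z ^ 3 ∈ A := by
  classical
  set f := Subring.inclusion h with hf
  -- `c` is integral over `A` as an element of `B`
  have hcint : IsIntegral (↥A) c := by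
    obtain ⟨P, hPm, hPe⟩ := hint ⟨c, hcC⟩
    refine ⟨P, hPm, ?_⟩
    have h2 := Polynomial.hom_eval₂ P f C.subtype (⟨c, hcC⟩ : ↥C)
    rw [hPe, map_zero] at h2
    have hcomp : C.subtype.comp f = algebraMap (↥A) B := by
      ext a; rfl
    rw [hcomp] at h2
    exact h2.symm
  -- the subring `D = A[c]`
  set Dalg := Algebra.adjoin (↥A) ({c} : Set B) with hDalg
  set D := Dalg.toSubring with hD
  have hAD : A ≤ D := by
    intro a ha
    have : algebraMap (↥A) B ⟨a, ha⟩ ∈ Dalg := Subalgebra.algebraMap_mem _ _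
    exact this
  have hcD : c ∈ D := Algebra.subset_adjoin rfl
  have hDC : D ≤ C := by
    have hle : Dalg ≤ subalgOf A C h :=
      Algebra.adjoin_le (Set.singleton_subset_iff.mpr hcC)
    exact fun x hx => hle hx
  have hcomp2 : (Subring.inclusion hDC).comp (Subring.inclusion hAD) = f := by
    ext a; rfl
  -- the conductor ideal of A in D
  set Idl : Ideal ↥A := {
    carrier := {a : ↥A | ∀ d ∈ D, (a : B) * d ∈ A}
    add_mem' := fun {x y} hx hy d hd => by
      have : ((x + y : ↥A) : B) * d = (x : B) * d + (y : B) * d := by push_cast; ring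
      rw [this]; exact A.add_mem (hx d hd) (hy d hd)
    zero_mem' := fun d hd => by
      have : ((0 : ↥A) : B) * d = 0 := by push_cast; ring
      rw [this]; exact A.zero_mem
    smul_mem' := fun r {x} hx d hd => by
      have : ((r • x : ↥A) : B) * d = (r : B) * ((x : B) * d) := by
        have hrx : (r • x : ↥A) = r * x := rfl
        rw [hrx]; push_cast; ring
      rw [this]; exact A.mul_mem r.2 (hx d hd) } with hIdl
  have hI_ne : Idl ≠ ⊤ := by
    intro htop
    have h1 : (1 : ↥A) ∈ Idl := htop ▸ Submodule.mem_top
    have := h1 c hcD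
    rw [OneMemClass.coe_one, one_mul] at this
    exact hcA this
  obtain ⟨pm, hpm_max, hIm⟩ := Ideal.exists_le_maximal Idl hI_ne
  haveI := hpm_max.isPrime
  obtain ⟨p, hpmin, -⟩ := Ideal.exists_minimalPrimes_le hIm
  have hp_prime : p.IsPrime := hpmin.1.1
  haveI := hp_prime
  have hIp : Idl ≤ p := hpmin.1.2
  -- a prime of C over p
  obtain ⟨Q, hQ⟩ := hsurj ⟨p, hp_prime⟩
  have hQp : Q.asIdeal.comap f = p := by
    rw [← PrimeSpectrum.comap_asIdeal, hQ]
  -- integrality of D → C and lifting of primes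
  have hintDC : ∀ x : ↥C, (Subring.inclusion hDC).IsIntegralElem x := by
    intro x
    obtain ⟨P, hPm, hPe⟩ := hint x
    refine ⟨P.map (Subring.inclusion hAD), hPm.map _, ?_⟩
    rw [Polynomial.eval₂_map, hcomp2]
    exact hPe
  have hlift : ∀ (P : Ideal ↥D), P.IsPrime →
      ∃ QC : Ideal ↥C, QC.IsPrime ∧ QC.comap (Subring.inclusion hDC) = P := by
    intro P hP
    letI := (Subring.inclusion hDC).toAlgebra
    haveI : Algebra.IsIntegral (↥D) (↥C) := ⟨fun x => hintDC x⟩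
    haveI := hP
    obtain ⟨QC, -, hQCp, hQCc⟩ := Ideal.exists_ideal_over_prime_of_isIntegral P ⊥
      (fun x hx => by
        have h0 : Subring.inclusion hDC x = 0 := (by simpa [Ideal.mem_comap] using hx : algebraMap (↥D) (↥C) x = 0)
        have hx0 : x = 0 := by
          have := congrArg Subtype.val h0
          exact Subtype.ext this
        simp [hx0])
    exact ⟨QC, hQCp, hQCc⟩
  -- uniqueness of primes of D over p
  have huniq : ∀ (P : Ideal ↥D), P.IsPrime → P.comap (Subring.inclusion hAD) = p →
      P = Q.asIdeal.comap (Subring.inclusion hDC) := by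
    intro P hP hPp
    obtain ⟨QC, hQCpr, hQCc⟩ := hlift P hP
    have hQCf : QC.comap f = p := by
      rw [← hcomp2, ← Ideal.comap_comap, hQCc, hPp]
    have heq : (⟨QC, hQCpr⟩ : PrimeSpectrum ↥C) = Q := by
      apply hinj
      apply PrimeSpectrum.ext
      rw [PrimeSpectrum.comap_asIdeal, PrimeSpectrum.comap_asIdeal, hQCf, hQp]
    have : QC = Q.asIdeal := congrArg PrimeSpectrum.asIdeal heq
    rw [← hQCc, this]
  -- a generator of D/A not locally in A at p
  obtain ⟨s, hs⟩ := hcint.fg_adjoin_singleton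
  have hg₀ex : ∃ g ∈ s, ∀ t : ↥A, t ∉ p → (t : B) * g ∉ A := by
    by_contra hcon
    push_neg at hcon
    choose tf htf1 htf2 using hcon
    set tt : ↥A := ∏ g ∈ s.attach, tf g.1 g.2 with htt
    have htnp : tt ∉ p := by
      have : tt ∈ p.primeCompl := Submonoid.prod_mem _ (fun g _ => htf1 g.1 g.2)
      exact this
    have htI : tt ∈ Idl := by
      intro d hd
      have hd' : d ∈ Submodule.span (↥A) (↑s : Set B) := by
        rw [hs]
        exact (Subalgebra.mem_toSubmodule _).mpr hd
      refine Submodule.span_induction ?_ ?_ ?_ ?_ hd'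
      · intro g hg
        have hgs : g ∈ s := hg
        have hsplit : tt = tf g hgs * ∏ x ∈ s.attach.erase ⟨g, hgs⟩, tf x.1 x.2 :=
          (Finset.mul_prod_erase s.attach _ (Finset.mem_attach s ⟨g, hgs⟩)).symm
        have hc : (tt : B) * g
            = ((∏ x ∈ s.attach.erase ⟨g, hgs⟩, tf x.1 x.2 : ↥A) : B)
              * ((tf g hgs : B) * g) := by
          rw [hsplit]; push_cast; ring
        rw [hc]
        exact A.mul_mem (SetLike.coe_mem _) (htf2 g hgs)
      · have : (tt : B) * 0 = 0 := by ring
        rw [this]; exact A.zero_mem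
      · intro x y _ _ hx hy
        have hc : (tt : B) * (x + y) = (tt : B) * x + (tt : B) * y := by ring
        rw [hc]; exact A.add_mem hx hy
      · intro a x _ hx
        have hc : (tt : B) * (a • x) = (a : B) * ((tt : B) * x) := by
          rw [Algebra.smul_def]
          show (tt : B) * ((a : B) * x) = _
          ring
        rw [hc]; exact A.mul_mem a.2 hx
    exact htnp (hIp htI)
  obtain ⟨g₀, hg₀s, hg₀⟩ := hg₀ex
  have hg₀D : g₀ ∈ D := by
    have hsp : g₀ ∈ Submodule.span (↥A) (↑s : Set B) := Submodule.subset_span hg₀s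
    rw [hs] at hsp
    exact (Subalgebra.mem_toSubmodule _).mp hsp
  have hg₀C : g₀ ∈ C := hDC hg₀D
  -- use triviality of the residue field extension at Q
  haveI := Q.2
  haveI hQcp : (Q.asIdeal.comap f).IsPrime := Q.2.comap f
  haveI := Localization.isLocalHom_localRingHom (Q.asIdeal.comap f) Q.asIdeal f rfl
  set L₁ := Localization.AtPrime (Q.asIdeal.comap f) with hL₁
  set L₂ := Localization.AtPrime Q.asIdeal with hL₂
  have hsurjΨ := (hres Q.asIdeal Q.2).2
  obtain ⟨ξ, hξ⟩ := hsurjΨ (IsLocalRing.residue L₂ (algebraMap (↥C) L₂ ⟨g₀, hg₀C⟩))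
  obtain ⟨w, rfl⟩ := IsLocalRing.residue_surjective ξ
  obtain ⟨⟨a, sd⟩, rfl⟩ := IsLocalization.mk'_surjective (Q.asIdeal.comap f).primeCompl w
  rw [IsLocalRing.ResidueField.map_residue, Localization.localRingHom_mk'] at hξ
  have hfsd : f ↑sd ∈ Q.asIdeal.primeCompl := sd.2
  have hXQ : (f ↑sd * ⟨g₀, hg₀C⟩ - f a : ↥C) ∈ Q.asIdeal := by
    have hspec : (algebraMap (↥C) L₂) (f ↑sd) * IsLocalization.mk' L₂ (f a) ⟨f ↑sd, hfsd⟩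
        = (algebraMap (↥C) L₂) (f a) := IsLocalization.mk'_spec' L₂ (f a) ⟨f ↑sd, hfsd⟩
    have hres0 : IsLocalRing.residue L₂
        (algebraMap (↥C) L₂ (f ↑sd * ⟨g₀, hg₀C⟩ - f a)) = 0 := by
      rw [map_sub, map_mul, map_sub, map_mul, ← hξ, ← map_mul, hspec, sub_self]
    rw [IsLocalRing.residue_eq_zero_iff] at hres0
    exact (IsLocalization.AtPrime.to_map_mem_maximal_iff L₂ Q.asIdeal _).mp hres0
  set X : ↥C := f ↑sd * ⟨g₀, hg₀C⟩ - f a with hXdef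
  have hXB : (X : B) = ((↑sd : ↥A) : B) * g₀ - ((a : ↥A) : B) := by
    rw [hXdef]; simp only [hf]; push_cast [aux_inclusion_coe]; ring
  have hXD : (X : B) ∈ D := by
    rw [hXB]
    exact D.sub_mem (D.mul_mem (hAD (↑sd : ↥A).2) hg₀D) (hAD a.2)
  set xD : ↥D := ⟨(X : B), hXD⟩ with hxDdef
  have hxq' : Subring.inclusion hDC xD ∈ Q.asIdeal := by
    have hh : Subring.inclusion hDC xD = X := Subtype.ext rfl
    rw [hh]; exact hXQ
  have hsdp : (↑sd : ↥A) ∉ p := by rw [← hQp]; exact sd.2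
  have hx_nt : ∀ t : ↥A, t ∉ p → (t : B) * (X : B) ∉ A := by
    intro t htp hmem
    have htsd : (t * ↑sd : ↥A) ∉ p := p.primeCompl.mul_mem htp hsdp
    have hcompm : ((t * ↑sd : ↥A) : B) * g₀ = (t : B) * (X : B) + ((t * a : ↥A) : B) := by
      rw [hXB]; push_cast; ring
    exact hg₀ _ htsd (by rw [hcompm]; exact A.add_mem hmem (SetLike.coe_mem _))
  -- the conductor ideal of A in D, as an ideal of D
  set KD : Ideal ↥D := {
    carrier := {y : ↥D | ∀ d ∈ D, (y : B) * d ∈ A}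
    add_mem' := fun {x y} hx hy d hd => by
      have hc : ((x + y : ↥D) : B) * d = (x : B) * d + (y : B) * d := by push_cast; ring
      rw [hc]; exact A.add_mem (hx d hd) (hy d hd)
    zero_mem' := fun d hd => by
      have hc : ((0 : ↥D) : B) * d = 0 := by push_cast; ring
      rw [hc]; exact A.zero_mem
    smul_mem' := fun r {y} hy d hd => by
      have hc : ((r • y : ↥D) : B) * d = (y : B) * ((r : B) * d) := by
        have hry : (r • y : ↥D) = r * y := rfl
        rw [hry]; push_cast; ring
      rw [hc]; exact hy _ (D.mul_mem r.2 hd) } with hKD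
  set gens : Set ↥D :=
    (fun t : ↥A => Subring.inclusion hAD t) '' {t : ↥A | t ∉ p} ∪ {xD} with hgens
  set T := Submonoid.closure gens with hT
  have hTform : ∀ y ∈ T, ∃ (t : ↥A) (k : ℕ),
      t ∉ p ∧ y = Subring.inclusion hAD t * xD ^ k := by
    intro y hy
    refine Submonoid.closure_induction ?_ ?_ ?_ hy
    · rintro x hx
      rw [hgens] at hx
      rcases hx with ⟨t, ht, rfl⟩ | rfl
      · exact ⟨t, 0, ht, by rw [pow_zero, mul_one]⟩
      · exact ⟨1, 1, p.primeCompl.one_mem, by rw [map_one, pow_one, one_mul]⟩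
    · exact ⟨1, 0, p.primeCompl.one_mem, by rw [map_one, pow_zero, one_mul]⟩
    · rintro x y hx hy ⟨t1, k1, ht1, rfl⟩ ⟨t2, k2, ht2, rfl⟩
      exact ⟨t1 * t2, k1 + k2, p.primeCompl.mul_mem ht1 ht2, by rw [map_mul, pow_add]; ring⟩
  have hndisj : ¬ Disjoint (KD : Set ↥D) (T : Set ↥D) := by
    intro hdisj
    obtain ⟨P, hPpr, hKP, hPT⟩ := Ideal.exists_le_prime_disjoint KD T hdisj
    have hPA_le : P.comap (Subring.inclusion hAD) ≤ p := by
      intro t ht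
      by_contra htp
      exact Set.disjoint_left.mp hPT (Ideal.mem_comap.mp ht)
        (Submonoid.subset_closure (by rw [hgens]; exact Or.inl ⟨t, htp, rfl⟩))
    have hIdlP : Idl ≤ P.comap (Subring.inclusion hAD) := by
      intro a' ha'
      rw [Ideal.mem_comap]
      apply hKP
      intro d hd
      exact ha' d hd
    have hple : p ≤ P.comap (Subring.inclusion hAD) :=
      hpmin.2 ⟨hPpr.comap _, hIdlP⟩ hPA_le
    have hPp : P.comap (Subring.inclusion hAD) = p := le_antisymm hPA_le hple
    have hPeq := huniq P hPpr hPp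
    have hxP : xD ∈ P := by rw [hPeq]; exact Ideal.mem_comap.mpr hxq'
    exact Set.disjoint_left.mp hPT hxP
      (Submonoid.subset_closure (by rw [hgens]; exact Or.inr rfl))
  obtain ⟨y, hyK, hyT⟩ := Set.not_disjoint_iff.mp hndisj
  obtain ⟨t, k, htp, rfl⟩ := hTform y hyT
  rcases Nat.eq_zero_or_pos k with rfl | hk
  · exfalso
    have hyy : (Subring.inclusion hAD t * xD ^ 0 : ↥D) = Subring.inclusion hAD t := by
      rw [pow_zero, mul_one]
    rw [hyy] at hyK
    have htIdl : t ∈ Idl := fun d hd => hyK d hd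
    exact htp (hIp htIdl)
  · set z : B := (t : B) * (X : B) with hz
    have hzA : z ∉ A := hx_nt t htp
    have hzj : ∀ j, k ≤ j → z ^ j ∈ A := by
      intro j hkj
      obtain ⟨k', rfl⟩ : ∃ k', k = k' + 1 := ⟨k - 1, by omega⟩
      obtain ⟨m, rfl⟩ : ∃ m, j = (k' + 1) + m := ⟨j - (k' + 1), by omega⟩
      have hd : ((t : B) ^ (k' + m) * (X : B) ^ m) ∈ D :=
        D.mul_mem (D.pow_mem (hAD t.2) _) (D.pow_mem hXD _)
      have hkey := hyK _ hd
      have hyc : ((Subring.inclusion hAD t * xD ^ (k' + 1) : ↥D) : B)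
          = (t : B) * (X : B) ^ (k' + 1) := by push_cast [aux_inclusion_coe]; rfl
      rw [hyc] at hkey
      have hc : z ^ (k' + 1 + m)
          = ((t : B) * (X : B) ^ (k' + 1)) * ((t : B) ^ (k' + m) * (X : B) ^ m) := by
        rw [hz]; ring
      rw [hc]; exact hkey
    set Sf := (Finset.range (k + 1)).filter (fun j => 1 ≤ j ∧ z ^ j ∉ A) with hSf
    have h1S : 1 ∈ Sf := by
      rw [hSf, Finset.mem_filter, Finset.mem_range]
      exact ⟨by omega, le_refl 1, by rw [pow_one]; exact hzA⟩
    have hSne : Sf.Nonempty := ⟨1, h1S⟩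
    set j₀ := Sf.max' hSne with hj₀
    have hj₀S : j₀ ∈ Sf := Sf.max'_mem hSne
    rw [hSf, Finset.mem_filter, Finset.mem_range] at hj₀S
    obtain ⟨hj₀r, hj₀1, hj₀A⟩ := hj₀S
    have hgt : ∀ j, j₀ < j → z ^ j ∈ A := by
      intro j hj
      by_contra hjA
      have h1j : 1 ≤ j := by omega
      rcases le_or_gt j k with hle | hlt
      · have hjS : j ∈ Sf := by
          rw [hSf, Finset.mem_filter, Finset.mem_range]
          exact ⟨by omega, h1j, hjA⟩
        have := Sf.le_max' j hjS
        omega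
      · exact hjA (hzj j (by omega))
    refine ⟨z ^ j₀, hj₀A, ?_, ?_⟩
    · rw [← pow_mul]; exact hgt _ (by omega)
    · rw [← pow_mul]; exact hgt _ (by omega)

end Aux

/-- Let `A` be a reduced commutative ring and `B` an extension of `A`.  Then `A` is
seminormal in `B` if and only if for every `b ∈ B`, `b² ∈ A` and `b³ ∈ A` imply `b ∈ A`. -/
theorem seminormal_in_iff_sq_cube (B : Type*) [CommRing B] (A : Subring B)
    (hred : IsReduced A) :
    A.IsSeminormalIn ↔ ∀ b : B, b ^ 2 ∈ A → b ^ 3 ∈ A → b ∈ A := by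
  constructor
  · intro hsn b hb2 hb3
    have hle : A ≤ scAdj A b hb2 := le_scAdj
    have hint := scAdj_isIntegral A b hb2
    have heq : scAdj A b hb2 = A :=
      hsn (scAdj A b hb2) hle
        ⟨hint,
          ⟨scAdj_spec_injective A b hb2 hb3,
            aux_comap_surjective _ hint (aux_inclusion_injective hle)⟩,
          scAdj_res_trivial A b hb2 hb3⟩
    exact heq ▸ self_mem_scAdj
  · intro hyp C h hsub
    obtain ⟨hint, hbij, hres⟩ := hsub
    refine le_antisymm ?_ h
    intro c hcC
    by_contra hcA
    obtain ⟨z, hzA, hz2, hz3⟩ := exists_sq_cube_elem h hint hbij.1 hbij.2 hres hcC hcA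
    exact hzA (hyp z hz2 hz3)
end

section
/- Let A be a Noetherian local ring of depth ≥ 2 and M a finitely generated faithful A-module of depth ≥ 2 (as A-module). Then Hom_A(M, M) has depth ≥ 2 as an A-module. -/
open Pointwise

section Aux

variable {A : Type*} [CommRing A] {M : Type*} [AddCommGroup M] [Module A M]

lemma mem_smul_top_iff' (x : A) (m : M) :
    m ∈ x • (⊤ : Submodule A M) ↔ ∃ n : M, x • n = m := by
  constructor
  · rintro ⟨n, -, rfl⟩
    exact ⟨n, rfl⟩
  · rintro ⟨n, rfl⟩
    exact ⟨n, trivial, rfl⟩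

lemma isSMulRegular_quot_iff (S : Submodule A M) (y : A) :
    IsSMulRegular (M ⧸ S) y ↔ ∀ m : M, y • m ∈ S → m ∈ S := by
  constructor
  · intro h m hm
    have h0 : y • (Submodule.Quotient.mk m : M ⧸ S) = y • (0 : M ⧸ S) := by
      rw [smul_zero, ← Submodule.Quotient.mk_smul, Submodule.Quotient.mk_eq_zero]
      exact hm
    have := h h0
    rwa [Submodule.Quotient.mk_eq_zero] at this
  · intro h a b hab
    obtain ⟨m, rfl⟩ := Submodule.Quotient.mk_surjective S a
    obtain ⟨n, rfl⟩ := Submodule.Quotient.mk_surjective S b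
    simp only [] at hab
    rw [← Submodule.Quotient.mk_smul, ← Submodule.Quotient.mk_smul,
      Submodule.Quotient.eq] at hab
    rw [Submodule.Quotient.eq]
    exact h (m - n) (by rwa [smul_sub])

end Aux

/-- Let `A` be a Noetherian local ring of depth ≥ 2 and `M` a finitely generated faithful
`A`-module of depth ≥ 2.  Then `Hom_A(M, M)` has depth ≥ 2 as an `A`-module. -/
theorem depth_end_ge_two (A : Type*) [CommRing A] [IsNoetherianRing A] [IsLocalRing A]
    (hA : depthGE A A 2)
    (M : Type*) [AddCommGroup M] [Module A M] [Module.Finite A M]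
    (hfaith : Module.annihilator A M = ⊥)
    (hM : depthGE A M 2) :
    depthGE A (M →ₗ[A] M) 2 := by
  obtain ⟨rs, hlen, hmem, hreg⟩ := hM
  obtain ⟨x, y, rfl⟩ : ∃ x y, rs = [x, y] := by
    match rs, hlen with
    | [x, y], _ => exact ⟨x, y, rfl⟩
  rw [RingTheory.Sequence.isWeaklyRegular_cons_iff,
    RingTheory.Sequence.isWeaklyRegular_cons_iff] at hreg
  obtain ⟨hx, hy, -⟩ := hreg
  rw [isSMulRegular_quot_iff] at hy
  -- x is regular on Hom(M, M)
  have hxE : IsSMulRegular (M →ₗ[A] M) x := by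
    intro f g h
    ext m
    exact hx (by simpa using LinearMap.congr_fun h m)
  -- y is regular on Hom(M, M)/x
  have hyE : ∀ f : M →ₗ[A] M, y • f ∈ x • (⊤ : Submodule A (M →ₗ[A] M)) →
      f ∈ x • (⊤ : Submodule A (M →ₗ[A] M)) := by
    intro f hf
    obtain ⟨g, hg⟩ := (mem_smul_top_iff' x (y • f)).mp hf
    -- every value of f is divisible by x
    have hfm : ∀ m : M, f m ∈ x • (⊤ : Submodule A M) := by
      intro m
      apply hy
      rw [mem_smul_top_iff']
      exact ⟨g m, by rw [← LinearMap.smul_apply, ← LinearMap.smul_apply, hg]⟩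
    set φ : M →ₗ[A] M := x • LinearMap.id with hφ
    have hφinj : Function.Injective φ := fun a b h => hx (by simpa [hφ] using h)
    have hrange : ∀ m : M, f m ∈ LinearMap.range φ := by
      intro m
      obtain ⟨n, hn⟩ := (mem_smul_top_iff' x (f m)).mp (hfm m)
      exact ⟨n, by simpa [hφ] using hn⟩
    set e : M ≃ₗ[A] LinearMap.range φ := LinearEquiv.ofInjective φ hφinj with he
    set h : M →ₗ[A] M :=
      e.symm.toLinearMap ∘ₗ f.codRestrict (LinearMap.range φ) hrange with hh
    rw [mem_smul_top_iff']
    refine ⟨h, ?_⟩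
    ext m
    have key : φ (h m) = f m := by
      have : (e (e.symm (f.codRestrict (LinearMap.range φ) hrange m)) : M) = f m := by
        rw [e.apply_symm_apply]
        rfl
      rw [← this, hh]
      simp [he, LinearEquiv.ofInjective_apply]
    simpa [hφ] using key
  refine ⟨[x, y], rfl, hmem, ?_⟩
  rw [RingTheory.Sequence.isWeaklyRegular_cons_iff,
    RingTheory.Sequence.isWeaklyRegular_cons_iff]
  exact ⟨hxE, (isSMulRegular_quot_iff _ y).mpr hyE, RingTheory.Sequence.IsWeaklyRegular.nil A _⟩
end
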